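/- arXiv:2507.06558 — 2 statements merged into one kernel-verified Lean document; each statement's English description precedes it below -/
import Mathlib

section
/- Let W ∈ ℝ^{n×m}, let α', α_A, α_B > 0 and set α = α'·α_A·α_B. Let g : ℝ^{n×m} → ℝ^{n×m} be any map (the gradient of the loss as a function of the effective weight), and let η_A, η_B > 0. Define sequences of matrices A^{(t)} ∈ ℝ^{r×m}, B^{(t)} ∈ ℝ^{n×r} by A^{(0)} = A_init, B^{(0)} = B_init, and the SGD updates A^{(t+1)} = A^{(t)} − η_A · α · (B^{(t)})^⊤ g(W + α B^{(t)} A^{(t)}), B^{(t+1)} = B^{(t)} − η_B · α · g(W + α B^{(t)} A^{(t)}) (A^{(t)})^⊤. Define reparameterized sequences by Ã^{(0)} = α_A A_init, B̃^{(0)} = α_B B_init, with updates Ã^{(t+1)} = Ã^{(t)} − (α_A² η_A) · α' · (B̃^{(t)})^⊤ g(W + α' B̃^{(t)} Ã^{(t)}), B̃^{(t+1)} = B̃^{(t)} − (α_B² η_B) · α' · g(W + α' B̃^{(t)} Ã^{(t)}) (Ã^{(t)})^⊤. Then for every t ≥ 0, Ã^{(t)} = α_A A^{(t)}, B̃^{(t)}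 = α_B B^{(t)}, and consequently α' B̃^{(t)} Ã^{(t)} = α B^{(t)} A^{(t)}. -/
open Matrix

/-- **Parameter Scaling Equivalence for SGD (LoRA reparameterization).**
If `α = α' * α_A * α_B` and the reparameterized sequences start from
`Atil⁽⁰⁾ = α_A • A_init`, `Btil⁽⁰⁾ = α_B • B_init` with learning rates
`α_A² η_A`, `α_B² η_B` and scaling `α'`, then for all `t`,
`Atil⁽ᵗ⁾ = α_A • A⁽ᵗ⁾`, `Btil⁽ᵗ⁾ = α_B • B⁽ᵗ⁾`, and `α' • Btil⁽ᵗ⁾ Atil⁽ᵗ⁾ = α • B⁽ᵗ⁾ A⁽ᵗ⁾`. -/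
theorem lora_sgd_parameter_scaling_equivalence
    (n m r : ℕ)
    (W : Matrix (Fin n) (Fin m) ℝ)
    (α' αA αB : ℝ) (hα' : 0 < α') (hαA : 0 < αA) (hαB : 0 < αB)
    (α : ℝ) (hα : α = α' * αA * αB)
    (g : Matrix (Fin n) (Fin m) ℝ → Matrix (Fin n) (Fin m) ℝ)
    (ηA ηB : ℝ) (hηA : 0 < ηA) (hηB : 0 < ηB)
    (Ainit : Matrix (Fin r) (Fin m) ℝ) (Binit : Matrix (Fin n) (Fin r) ℝ)
    (A : ℕ → Matrix (Fin r) (Fin m) ℝ) (B : ℕ → Matrix (Fin n) (Fin r) ℝ)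
    (hA0 : A 0 = Ainit) (hB0 : B 0 = Binit)
    (hA : ∀ t, A (t + 1) =
      A t - (ηA * α) • ((B t)ᵀ * g (W + α • (B t * A t))))
    (hB : ∀ t, B (t + 1) =
      B t - (ηB * α) • (g (W + α • (B t * A t)) * (A t)ᵀ))
    (Atil : ℕ → Matrix (Fin r) (Fin m) ℝ) (Btil : ℕ → Matrix (Fin n) (Fin r) ℝ)
    (hAtil0 : Atil 0 = αA • Ainit) (hBtil0 : Btil 0 = αB • Binit)
    (hAtil : ∀ t, Atil (t + 1) =
      Atil t - (αA ^ 2 * ηA * α') • ((Btil t)ᵀ * g (W + α' • (Btil t * Atil t))))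
    (hBtil : ∀ t, Btil (t + 1) =
      Btil t - (αB ^ 2 * ηB * α') • (g (W + α' • (Btil t * Atil t)) * (Atil t)ᵀ)) :
    ∀ t, Atil t = αA • A t ∧ Btil t = αB • B t ∧
      α' • (Btil t * Atil t) = α • (B t * A t) := by
  have key : ∀ (At : Matrix (Fin r) (Fin m) ℝ) (Bt : Matrix (Fin n) (Fin r) ℝ),
      α' • ((αB • Bt) * (αA • At)) = α • (Bt * At) := by
    intro At Bt
    rw [Matrix.smul_mul, Matrix.mul_smul, smul_smul, smul_smul, hα]
    ring_nf
  intro t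
  induction t with
  | zero =>
    refine ⟨by rw [hAtil0, hA0], by rw [hBtil0, hB0], ?_⟩
    rw [hAtil0, hBtil0, hA0, hB0, key]
  | succ t ih =>
    obtain ⟨ha, hb, hc⟩ := ih
    have hAt : Atil (t + 1) = αA • A (t + 1) := by
      rw [hAtil t, hA t, ha, hb, key, smul_sub, smul_smul, Matrix.transpose_smul,
        Matrix.smul_mul, smul_smul, hα]
      ring_nf
    have hBt : Btil (t + 1) = αB • B (t + 1) := by
      rw [hBtil t, hB t, ha, hb, key, smul_sub, smul_smul, Matrix.transpose_smul,
        Matrix.mul_smul, smul_smul, hα]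
      ring_nf
    exact ⟨hAt, hBt, by rw [hAt, hBt, key]⟩
end

section
/- Let Σ ∈ ℝ^{m×m} be symmetric positive definite, W₀, W* ∈ ℝ^{n×m}, α ≥ 0, M₁, M₂ ≥ 0, and assume α r √(m n M₁ M₂) < ‖W₀ − W*‖_F. Then for every A ∈ ℝ^{r×m} with ‖A‖_F² ≤ r m M₁ and every B ∈ ℝ^{n×r} with ‖B‖_F² ≤ r n M₂, Tr( (W₀ + αBA − W*) Σ (W₀ + αBA − W*)^⊤ ) ≥ λ_min(Σ) · ( ‖W₀ − W*‖_F − α r √(m n M₁ M₂) )² > 0. That is, the excess risk of the best LoRA-constrained linear predictor over the optimal linear predictor W* is strictly positive and bounded below by this quantity. -/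
/-!
The LoRA update `αBA` has Frobenius norm at most `α‖B‖_F‖A‖_F ≤ αr√(mnM₁M₂)`, so by the reverse
triangle inequality the error `E = W₀ + αBA − W*` satisfies
`‖E‖_F ≥ ‖W₀ − W*‖_F − αr√(mnM₁M₂) > 0`. Since `Σ ≥ λ_min(Σ) • 1` in the Loewner order,
`Tr(EΣEᵀ) ≥ λ_min(Σ) Tr(EEᵀ) = λ_min(Σ) ‖E‖_F²`, and `λ_min(Σ) > 0` as `Σ` is positive definite.
-/

open Matrix
open scoped Matrix.Norms.Frobenius MatrixOrder

namespace Matrix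

variable {ι κ μ : Type*} [Fintype ι] [Fintype κ] [Fintype μ]

theorem frobenius_norm_sq_eq_sum_sq (M : Matrix ι κ ℝ) : ‖M‖ ^ 2 = ∑ i, ∑ j, M i j ^ 2 := by
  rw [frobenius_norm_def, ← Real.sqrt_eq_rpow, Real.sq_sqrt (by positivity)]
  simp only [Real.rpow_two, Real.norm_eq_abs, sq_abs]

theorem frobenius_norm_eq_sqrt_sum_sq (M : Matrix ι κ ℝ) : ‖M‖ = √(∑ i, ∑ j, M i j ^ 2) := by
  rw [← frobenius_norm_sq_eq_sum_sq, Real.sqrt_sq (norm_nonneg M)]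

theorem trace_mul_transpose_self_eq_frobenius_norm_sq (E : Matrix ι κ ℝ) :
    (E * Eᵀ).trace = ‖E‖ ^ 2 := by
  rw [frobenius_norm_sq_eq_sum_sq]
  simp [trace, mul_apply, sq]

theorem frobenius_norm_mul_le_sqrt_mul {B : Matrix μ κ ℝ} {A : Matrix κ ι ℝ} {b a : ℝ}
    (hB : ‖B‖ ^ 2 ≤ b) (hA : ‖A‖ ^ 2 ≤ a) : ‖B * A‖ ≤ √(b * a) := by
  rw [Real.sqrt_mul ((sq_nonneg _).trans hB)]
  calc ‖B * A‖ ≤ ‖B‖ * ‖A‖ := frobenius_norm_mul B A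
    _ ≤ √b * √a := by
      gcongr
      · simpa using Real.abs_le_sqrt hB
      · simpa using Real.abs_le_sqrt hA

theorem IsHermitian.smul_one_le [DecidableEq ι] {S : Matrix ι ι ℝ} (hS : S.IsHermitian) {c : ℝ}
    (hc : ∀ i, c ≤ hS.eigenvalues i) : c • 1 ≤ S := by
  rw [← Algebra.algebraMap_eq_smul_one, algebraMap_le_iff_le_spectrum hS.isSelfAdjoint,
    hS.spectrum_real_eq_range_eigenvalues]
  rintro _ ⟨i, rfl⟩
  exact hc i

theorem trace_mul_mul_transpose_le_of_le {S T : Matrix ι ι ℝ} (h : S ≤ T) (E : Matrix μ ι ℝ) :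
    (E * S * Eᵀ).trace ≤ (E * T * Eᵀ).trace := by
  have hpsd := ((le_iff.mp h).mul_mul_conjTranspose_same E).trace_nonneg
  rwa [conjTranspose_eq_transpose_of_trivial, Matrix.mul_sub, Matrix.sub_mul, trace_sub,
    sub_nonneg] at hpsd

theorem IsHermitian.mul_trace_mul_transpose_le [DecidableEq ι] {S : Matrix ι ι ℝ}
    (hS : S.IsHermitian) {c : ℝ} (hc : ∀ i, c ≤ hS.eigenvalues i) (E : Matrix μ ι ℝ) :
    c * (E * Eᵀ).trace ≤ (E * S * Eᵀ).trace := by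
  simpa using trace_mul_mul_transpose_le_of_le (hS.smul_one_le hc) E

theorem IsHermitian.iInf_eigenvalues_le [DecidableEq ι] {S : Matrix ι ι ℝ} (hS : S.IsHermitian)
    (i : ι) : ⨅ j, hS.eigenvalues j ≤ hS.eigenvalues i :=
  ciInf_le (Finite.bddBelow_range _) i

theorem PosDef.iInf_eigenvalues_pos [DecidableEq ι] [Nonempty ι] {S : Matrix ι ι ℝ}
    (hS : S.PosDef) : 0 < ⨅ i, hS.1.eigenvalues i := by
  obtain ⟨i, hi⟩ := exists_eq_ciInf_of_finite (f := hS.1.eigenvalues)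
  exact hi ▸ hS.eigenvalues_pos i

end Matrix

theorem lora_representation_error_lower_bound_general
    (m n r : ℕ)
    (S : Matrix (Fin m) (Fin m) ℝ) (hS : S.PosDef)
    (W₀ Wstar : Matrix (Fin n) (Fin m) ℝ)
    (α : ℝ) (hα : 0 ≤ α)
    (M₁ M₂ : ℝ)
    (hgap : α * r * Real.sqrt ((m : ℝ) * n * M₁ * M₂)
      < Real.sqrt (∑ i, ∑ j, ((W₀ - Wstar) i j) ^ 2)) :
    ∀ (A : Matrix (Fin r) (Fin m) ℝ) (B : Matrix (Fin n) (Fin r) ℝ),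
      (∑ i, ∑ j, (A i j) ^ 2) ≤ (r : ℝ) * m * M₁ →
      (∑ i, ∑ j, (B i j) ^ 2) ≤ (r : ℝ) * n * M₂ →
      ((W₀ + α • (B * A) - Wstar) * S * (W₀ + α • (B * A) - Wstar)ᵀ).trace
        ≥ (⨅ i, hS.1.eigenvalues i) *
            (Real.sqrt (∑ i, ∑ j, ((W₀ - Wstar) i j) ^ 2)
              - α * r * Real.sqrt ((m : ℝ) * n * M₁ * M₂)) ^ 2
      ∧ 0 < (⨅ i, hS.1.eigenvalues i) *
            (Real.sqrt (∑ i, ∑ j, ((W₀ - Wstar) i j) ^ 2)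
              - α * r * Real.sqrt ((m : ℝ) * n * M₁ * M₂)) ^ 2 := by
  intro A B hA hB
  rw [← frobenius_norm_eq_sqrt_sum_sq] at hgap ⊢
  rw [← frobenius_norm_sq_eq_sum_sq] at hA hB
  have hupdate : ‖α • (B * A)‖ ≤ α * r * √((m : ℝ) * n * M₁ * M₂) := by
    rw [norm_smul, Real.norm_of_nonneg hα, mul_assoc]
    gcongr
    calc ‖B * A‖ ≤ √((r * n * M₂) * (r * m * M₁)) := frobenius_norm_mul_le_sqrt_mul hB hA
      _ = r * √((m : ℝ) * n * M₁ * M₂) := by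
        rw [show (r * n * M₂) * (r * m * M₁) = ((r : ℝ) * r) * (m * n * M₁ * M₂) by ring,
          Real.sqrt_mul (mul_self_nonneg _), Real.sqrt_mul_self r.cast_nonneg]
  have hc : 0 ≤ α * r * √((m : ℝ) * n * M₁ * M₂) := by positivity
  set c := α * r * √((m : ℝ) * n * M₁ * M₂)
  have herror : ‖W₀ - Wstar‖ - c ≤ ‖W₀ + α • (B * A) - Wstar‖ :=
    calc ‖W₀ - Wstar‖ - c ≤ ‖W₀ - Wstar‖ - ‖α • (B * A)‖ := by gcongr
      _ ≤ ‖W₀ - Wstar + α • (B * A)‖ := norm_sub_le_norm_add _ _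
      _ = ‖W₀ + α • (B * A) - Wstar‖ := by rw [sub_add_eq_add_sub]
  -- For `m = 0` the infimum of the eigenvalues would be the junk value `0`.
  have : Nonempty (Fin m) := by
    refine not_isEmpty_iff.mp fun _ => ?_
    rw [Subsingleton.elim (W₀ - Wstar) 0, norm_zero] at hgap
    linarith
  have hlam := hS.iInf_eigenvalues_pos
  have hmargin := sub_pos.mpr hgap
  refine ⟨?_, mul_pos hlam (pow_pos hmargin 2)⟩
  calc (⨅ i, hS.1.eigenvalues i) * (‖W₀ - Wstar‖ - c) ^ 2
      ≤ (⨅ i, hS.1.eigenvalues i) * ‖W₀ + α • (B * A) - Wstar‖ ^ 2 := by gcongr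
    _ ≤ _ := by
      rw [← trace_mul_transpose_self_eq_frobenius_norm_sq]
      exact hS.1.mul_trace_mul_transpose_le hS.1.iInf_eigenvalues_le _

/-- **Strictly positive lower bound on the representation error of LoRA.**
For positive definite input covariance `Σ` and target `W*` with
`α r √(m n M₁ M₂) < ‖W₀ − W*‖_F`, every LoRA-constrained weight
`W₀ + αBA` (with `‖A‖_F² ≤ rmM₁`, `‖B‖_F² ≤ rnM₂`) has excess risk
`Tr((W₀+αBA−W*) Σ (W₀+αBA−W*)ᵀ) ≥ λ_min(Σ)(‖W₀−W*‖_F − αr√(mnM₁M₂))² > 0`. -/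
theorem lora_representation_error_lower_bound
    (m n r : ℕ)
    (S : Matrix (Fin m) (Fin m) ℝ) (hS : S.PosDef)
    (W₀ Wstar : Matrix (Fin n) (Fin m) ℝ)
    (α : ℝ) (hα : 0 ≤ α)
    (M₁ M₂ : ℝ) (hM₁ : 0 ≤ M₁) (hM₂ : 0 ≤ M₂)
    (hgap : α * r * Real.sqrt ((m : ℝ) * n * M₁ * M₂)
      < Real.sqrt (∑ i, ∑ j, ((W₀ - Wstar) i j) ^ 2)) :
    ∀ (A : Matrix (Fin r) (Fin m) ℝ) (B : Matrix (Fin n) (Fin r) ℝ),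
      (∑ i, ∑ j, (A i j) ^ 2) ≤ (r : ℝ) * m * M₁ →
      (∑ i, ∑ j, (B i j) ^ 2) ≤ (r : ℝ) * n * M₂ →
      ((W₀ + α • (B * A) - Wstar) * S * (W₀ + α • (B * A) - Wstar)ᵀ).trace
        ≥ (⨅ i, hS.1.eigenvalues i) *
            (Real.sqrt (∑ i, ∑ j, ((W₀ - Wstar) i j) ^ 2)
              - α * r * Real.sqrt ((m : ℝ) * n * M₁ * M₂)) ^ 2
      ∧ 0 < (⨅ i, hS.1.eigenvalues i) *
            (Real.sqrt (∑ i, ∑ j, ((W₀ - Wstar) i j) ^ 2)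
              - α * r * Real.sqrt ((m : ℝ) * n * M₁ * M₂)) ^ 2 :=
  lora_representation_error_lower_bound_general m n r S hS W₀ Wstar α hα M₁ M₂ hgap
end
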